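/- Let L be a LOTS, i.e., a linear order equipped with its order topology. Then M_p(L) is a topological group: both the composition map (f, g) ↦ f ∘ g and the inversion map f ↦ f⁻¹ are continuous with respect to the topology of pointwise convergence. -/

import Mathlib

open Set Topology TopologicalSpace Filter

variable (L : Type*) [LinearOrder L] [TopologicalSpace L]

/-- The set `M(L)` of monotonic autohomeomorphisms of `L`: homeomorphisms `L → L` that are
either strictly increasing or strictly decreasing. -/
abbrev MonoHomeo := {f : L ≃ₜ L // StrictMono f ∨ StrictAnti f}

namespace MonoHomeo

variable {L}

/-- The topology of pointwise convergence on `M(L)`, giving `M_p(L)`: the topology induced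
from the product topology on `L → L` via the underlying-function map. -/
instance : TopologicalSpace (MonoHomeo L) :=
  TopologicalSpace.induced (fun f => ((f.1 : L ≃ₜ L) : L → L)) Pi.topologicalSpace

theorem symm_strictMono {e : L ≃ₜ L} (h : StrictMono e) : StrictMono (e.symm : L → L) := by
  intro a b hab
  rw [← e.apply_symm_apply a, ← e.apply_symm_apply b] at hab
  exact h.lt_iff_lt.mp hab

theorem symm_strictAnti {e : L ≃ₜ L} (h : StrictAnti e) : StrictAnti (e.symm : L → L) := by
  intro a b hab
  rw [← e.apply_symm_apply a, ← e.apply_symm_apply b] at hab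
  exact h.lt_iff_gt.mp hab

/-- Composition in `M(L)`: `f * g = f ∘ g`. -/
instance : Mul (MonoHomeo L) :=
  ⟨fun f g => ⟨g.1.trans f.1, by
    rcases f.2 with hf | hf <;> rcases g.2 with hg | hg
    · exact Or.inl (hf.comp hg)
    · exact Or.inr (hf.comp_strictAnti hg)
    · exact Or.inr (hf.comp_strictMono hg)
    · exact Or.inl (hf.comp hg)⟩⟩

instance : One (MonoHomeo L) := ⟨⟨Homeomorph.refl L, Or.inl strictMono_id⟩⟩

/-- Inversion in `M(L)`. -/
instance : Inv (MonoHomeo L) :=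
  ⟨fun f => ⟨f.1.symm, by
    rcases f.2 with hf | hf
    · exact Or.inl (symm_strictMono hf)
    · exact Or.inr (symm_strictAnti hf)⟩⟩

@[simp] theorem mul_apply (f g : MonoHomeo L) (x : L) : (f * g).1 x = f.1 (g.1 x) := rfl

@[simp] theorem inv_apply (f : MonoHomeo L) (x : L) : (f⁻¹).1 x = f.1.symm x := rfl

@[simp] theorem one_apply (x : L) : (1 : MonoHomeo L).1 x = x := rfl

/-- `M(L)` is a group under composition. -/
instance : Group (MonoHomeo L) where
  mul_assoc f g h := Subtype.ext (by ext x; rfl)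
  one_mul f := Subtype.ext (by ext x; rfl)
  mul_one f := Subtype.ext (by ext x; rfl)
  inv_mul_cancel f := Subtype.ext (by ext x; exact f.1.symm_apply_apply x)

end MonoHomeo

section Aux

variable {L : Type*} [LinearOrder L] [TopologicalSpace L] [OrderTopology L]

theorem MonoHomeo.continuous_eval (x : L) :
    Continuous fun f : MonoHomeo L => (f.1 x : L) :=
  (continuous_apply x).comp continuous_induced_dom

theorem MonoHomeo.inv_left {f₀ : MonoHomeo L} {x z₁ : L} (h₁ : z₁ ≤ f₀.1.symm x)
    (h₂ : Ici z₁ ∈ 𝓝 (f₀.1.symm x)) :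
    ∃ W : Set (MonoHomeo L), IsOpen W ∧ f₀ ∈ W ∧ ∀ f ∈ W, z₁ ≤ f.1.symm x := by
  set z₀ := f₀.1.symm x with hz₀
  have hx : f₀.1 z₀ = x := f₀.1.apply_symm_apply x
  by_cases htriv : ∀ y, z₁ ≤ y
  · exact ⟨Set.univ, isOpen_univ, Set.mem_univ _, fun f _ => htriv _⟩
  have hp : ∃ p, p < z₀ ∧ ∀ y, p < y → z₁ ≤ y := by
    rcases lt_or_eq_of_le h₁ with h | h
    · exact ⟨z₁, h, fun y hy => hy.le⟩
    · push_neg at htriv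
      obtain ⟨l, hl⟩ := htriv
      have hl' : l < z₀ := lt_of_lt_of_le hl h.le
      obtain ⟨p, hpz, hsub⟩ := exists_Ioc_subset_of_mem_nhds h₂ ⟨l, hl'⟩
      refine ⟨p, hpz, fun y hy => ?_⟩
      by_contra hcon
      have hyz : y ≤ z₀ := ((not_le.mp hcon).le.trans h.le)
      exact hcon (hsub ⟨hy, hyz⟩)
  obtain ⟨p, hpz, hp⟩ := hp
  rcases f₀.2 with hmono | hanti
  · refine ⟨{f | f.1 p < x ∧ f.1 p < f.1 z₀}, ?_, ?_, ?_⟩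
    · exact (isOpen_lt (MonoHomeo.continuous_eval p) continuous_const).inter
        (isOpen_lt (MonoHomeo.continuous_eval p) (MonoHomeo.continuous_eval z₀))
    · exact ⟨hx ▸ hmono hpz, hmono hpz⟩
    · intro f hf
      rcases f.2 with hm | ha
      · have h1 : f.1 p < f.1 (f.1.symm x) := by rw [f.1.apply_symm_apply]; exact hf.1
        exact hp _ (hm.lt_iff_lt.mp h1)
      · exact absurd hf.2 (not_lt.mpr (ha hpz).le)
  · refine ⟨{f | x < f.1 p ∧ f.1 z₀ < f.1 p}, ?_, ?_, ?_⟩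
    · exact (isOpen_lt continuous_const (MonoHomeo.continuous_eval p)).inter
        (isOpen_lt (MonoHomeo.continuous_eval z₀) (MonoHomeo.continuous_eval p))
    · exact ⟨hx ▸ hanti hpz, hanti hpz⟩
    · intro f hf
      rcases f.2 with hm | ha
      · exact absurd hf.2 (not_lt.mpr (hm hpz).le)
      · have h1 : f.1 (f.1.symm x) < f.1 p := by rw [f.1.apply_symm_apply]; exact hf.1
        exact hp _ (ha.lt_iff_gt.mp h1)

theorem MonoHomeo.inv_right {f₀ : MonoHomeo L} {x z₂ : L} (h₁ : f₀.1.symm x ≤ z₂)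
    (h₂ : Iic z₂ ∈ 𝓝 (f₀.1.symm x)) :
    ∃ W : Set (MonoHomeo L), IsOpen W ∧ f₀ ∈ W ∧ ∀ f ∈ W, f.1.symm x ≤ z₂ := by
  set z₀ := f₀.1.symm x with hz₀
  have hx : f₀.1 z₀ = x := f₀.1.apply_symm_apply x
  by_cases htriv : ∀ y, y ≤ z₂
  · exact ⟨Set.univ, isOpen_univ, Set.mem_univ _, fun f _ => htriv _⟩
  have hq : ∃ q, z₀ < q ∧ ∀ y, y < q → y ≤ z₂ := by
    rcases lt_or_eq_of_le h₁ with h | h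
    · exact ⟨z₂, h, fun y hy => hy.le⟩
    · push_neg at htriv
      obtain ⟨u, hu⟩ := htriv
      have hu' : z₀ < u := lt_of_le_of_lt h.le hu
      obtain ⟨q, hqz, hsub⟩ := exists_Ico_subset_of_mem_nhds h₂ ⟨u, hu'⟩
      refine ⟨q, hqz, fun y hy => ?_⟩
      by_contra hcon
      have hyz : z₀ ≤ y := h.le.trans (not_le.mp hcon).le
      exact hcon (hsub ⟨hyz, hy⟩)
  obtain ⟨q, hqz, hq⟩ := hq
  rcases f₀.2 with hmono | hanti
  · refine ⟨{f | x < f.1 q ∧ f.1 z₀ < f.1 q}, ?_, ?_, ?_⟩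
    · exact (isOpen_lt continuous_const (MonoHomeo.continuous_eval q)).inter
        (isOpen_lt (MonoHomeo.continuous_eval z₀) (MonoHomeo.continuous_eval q))
    · exact ⟨hx ▸ hmono hqz, hmono hqz⟩
    · intro f hf
      rcases f.2 with hm | ha
      · have h1 : f.1 (f.1.symm x) < f.1 q := by rw [f.1.apply_symm_apply]; exact hf.1
        exact hq _ (hm.lt_iff_lt.mp h1)
      · exact absurd hf.2 (not_lt.mpr (ha hqz).le)
  · refine ⟨{f | f.1 q < x ∧ f.1 q < f.1 z₀}, ?_, ?_, ?_⟩
    · exact (isOpen_lt (MonoHomeo.continuous_eval q) continuous_const).inter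
        (isOpen_lt (MonoHomeo.continuous_eval q) (MonoHomeo.continuous_eval z₀))
    · exact ⟨hx ▸ hanti hqz, hanti hqz⟩
    · intro f hf
      rcases f.2 with hm | ha
      · exact absurd hf.2 (not_lt.mpr (hm hqz).le)
      · have h1 : f.1 q < f.1 (f.1.symm x) := by rw [f.1.apply_symm_apply]; exact hf.1
        exact hq _ (ha.lt_iff_gt.mp h1)

theorem MonoHomeo.continuous_inv_eval (x : L) :
    Continuous fun f : MonoHomeo L => (f.1.symm x : L) := by
  rw [continuous_iff_continuousAt]
  intro f₀
  rw [ContinuousAt, Filter.tendsto_def]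
  intro U hU
  obtain ⟨z₁, z₂, ⟨hz₁, hz₂⟩, hmem, hsub⟩ := exists_Icc_mem_subset_of_mem_nhds hU
  have hIci : Ici z₁ ∈ 𝓝 (f₀.1.symm x) := Filter.mem_of_superset hmem Icc_subset_Ici_self
  have hIic : Iic z₂ ∈ 𝓝 (f₀.1.symm x) := Filter.mem_of_superset hmem Icc_subset_Iic_self
  obtain ⟨W₁, hW₁o, hW₁m, hW₁⟩ := MonoHomeo.inv_left hz₁ hIci
  obtain ⟨W₂, hW₂o, hW₂m, hW₂⟩ := MonoHomeo.inv_right hz₂ hIic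
  exact Filter.mem_of_superset ((hW₁o.inter hW₂o).mem_nhds ⟨hW₁m, hW₂m⟩)
    (fun f hf => hsub ⟨hW₁ f hf.1, hW₂ f hf.2⟩)

theorem MonoHomeo.continuous_mul_eval (x : L) :
    Continuous fun p : MonoHomeo L × MonoHomeo L => (p.1.1 (p.2.1 x) : L) := by
  rw [continuous_iff_continuousAt]
  rintro ⟨f₀, g₀⟩
  rw [ContinuousAt, Filter.tendsto_def]
  intro U hU
  obtain ⟨c, d, ⟨hc, hd⟩, hmem, hsub⟩ := exists_Icc_mem_subset_of_mem_nhds hU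
  set V := interior (Icc c d) with hV_def
  have hV : f₀.1 (g₀.1 x) ∈ V := mem_interior_iff_mem_nhds.mpr hmem
  have hpre : (fun y => f₀.1 y) ⁻¹' V ∈ 𝓝 (g₀.1 x) :=
    (isOpen_interior.preimage f₀.1.continuous).mem_nhds hV
  obtain ⟨z₁, z₂, ⟨hz₁, hz₂⟩, hm2, hs2⟩ := exists_Icc_mem_subset_of_mem_nhds hpre
  set S := interior (Icc z₁ z₂) with hS_def
  have hS : g₀.1 x ∈ S := mem_interior_iff_mem_nhds.mpr hm2
  have hopen : IsOpen {p : MonoHomeo L × MonoHomeo L |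
      p.1.1 z₁ ∈ V ∧ p.1.1 z₂ ∈ V ∧ p.2.1 x ∈ S} := by
    have h1 : Continuous fun p : MonoHomeo L × MonoHomeo L => (p.1.1 z₁ : L) :=
      (MonoHomeo.continuous_eval z₁).comp continuous_fst
    have h2 : Continuous fun p : MonoHomeo L × MonoHomeo L => (p.1.1 z₂ : L) :=
      (MonoHomeo.continuous_eval z₂).comp continuous_fst
    have h3 : Continuous fun p : MonoHomeo L × MonoHomeo L => (p.2.1 x : L) :=
      (MonoHomeo.continuous_eval x).comp continuous_snd
    exact (isOpen_interior.preimage h1).inter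
      ((isOpen_interior.preimage h2).inter (isOpen_interior.preimage h3))
  have hmemW : (f₀, g₀) ∈ {p : MonoHomeo L × MonoHomeo L |
      p.1.1 z₁ ∈ V ∧ p.1.1 z₂ ∈ V ∧ p.2.1 x ∈ S} :=
    ⟨hs2 ⟨le_rfl, hz₁.trans hz₂⟩, hs2 ⟨hz₁.trans hz₂, le_rfl⟩, hS⟩
  refine Filter.mem_of_superset (hopen.mem_nhds hmemW) ?_
  rintro ⟨f, g⟩ ⟨h1, h2, h3⟩
  have hg : g.1 x ∈ Icc z₁ z₂ := interior_subset h3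
  have hcd1 : f.1 z₁ ∈ Icc c d := interior_subset h1
  have hcd2 : f.1 z₂ ∈ Icc c d := interior_subset h2
  apply hsub
  rcases f.2 with hm | ha
  · exact ⟨hcd1.1.trans (hm.monotone hg.1), (hm.monotone hg.2).trans hcd2.2⟩
  · exact ⟨hcd2.1.trans (ha.antitone hg.2), (ha.antitone hg.1).trans hcd1.2⟩

end Aux

/-- **Sorin.** If `L` is a LOTS (a linear order with its order topology), then
`M_p(L)` is a topological group: composition and inversion are both continuous. -/
theorem topologicalGroup_of_LOTS
    {L : Type*} [LinearOrder L] [TopologicalSpace L] [OrderTopology L] :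
    IsTopologicalGroup (MonoHomeo L) := by
  refine { toContinuousMul := ⟨?_⟩, toContinuousInv := ⟨?_⟩ }
  · apply continuous_induced_rng.mpr
    apply continuous_pi
    intro x
    exact MonoHomeo.continuous_mul_eval x
  · apply continuous_induced_rng.mpr
    apply continuous_pi
    intro x
    exact MonoHomeo.continuous_inv_eval x
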